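/- arXiv:2111.02925 — 2 statements merged into one kernel-verified Lean document; each statement's English description precedes it below -/
import Mathlib

section
/- For a 3D dataset f_{ijk} with 0 ≤ i < n_1, 0 ≤ j < n_2, 0 ≤ k < n_3 (each n_m ≥ 2), the coefficients β_0, β_1, β_2, β_3 given by β_1 = 6/(n_1 n_2 n_3 (n_1+1))·(2V_x/(n_1−1) − V_0), β_2 = 6/(n_1 n_2 n_3 (n_2+1))·(2V_y/(n_2−1) − V_0), β_3 = 6/(n_1 n_2 n_3 (n_3+1))·(2V_z/(n_3−1) − V_0), and β_0 = V_0/(n_1 n_2 n_3) − ((n_1−1)/2·β_1 + (n_2−1)/2·β_2 + (n_3−1)/2·β_3) satisfy the normal equations of the least-squares problem minimizing SE = Σ_{i,j,k} (β_0 + β_1 i + β_2 j + β_3 k − f_{ijk})², i.e., all four partial derivatives of SE vanish at these values. -/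
set_option maxHeartbeats 2000000

open Finset

lemma mysum0 (n : ℕ) : ∑ _i ∈ range n, (1:ℝ) = n := by simp

lemma mysum1 (n : ℕ) : ∑ i ∈ range n, (i:ℝ) = n*(n-1)/2 := by
  induction n with
  | zero => simp
  | succ m ih => rw [Finset.sum_range_succ, ih]; push_cast; ring

lemma mysum2 (n : ℕ) : ∑ i ∈ range n, (i:ℝ)^2 = n*(n-1)*(2*n-1)/6 := by
  induction n with
  | zero => simp
  | succ m ih => rw [Finset.sum_range_succ, ih]; push_cast; ring

lemma sum3_split (n1 n2 n3 : ℕ) (u v w : ℕ → ℝ) :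
    ∑ i ∈ range n1, ∑ j ∈ range n2, ∑ k ∈ range n3, u i * v j * w k
      = (∑ i ∈ range n1, u i) * (∑ j ∈ range n2, v j) * (∑ k ∈ range n3, w k) := by
  rw [Finset.sum_mul_sum, Finset.sum_mul]
  simp_rw [Finset.sum_mul, mul_assoc, ← Finset.mul_sum]

lemma derivKey (n1 n2 n3 : ℕ) (a c : ℕ → ℕ → ℕ → ℝ) (x : ℝ) :
    deriv (fun t => ∑ i ∈ range n1, ∑ j ∈ range n2, ∑ k ∈ range n3,
        (a i j k * t + c i j k)^2) x
      = ∑ i ∈ range n1, ∑ j ∈ range n2, ∑ k ∈ range n3,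
          2 * a i j k * (a i j k * x + c i j k) := by
  have h : HasDerivAt (fun t => ∑ i ∈ range n1, ∑ j ∈ range n2, ∑ k ∈ range n3,
      (a i j k * t + c i j k)^2)
      (∑ i ∈ range n1, ∑ j ∈ range n2, ∑ k ∈ range n3,
        2 * a i j k * (a i j k * x + c i j k)) x := by
    apply HasDerivAt.fun_sum; intro i _
    apply HasDerivAt.fun_sum; intro j _
    apply HasDerivAt.fun_sum; intro k _
    have := (((hasDerivAt_id x).const_mul (a i j k)).add_const (c i j k)).pow 2
    exact this.congr_deriv (by simp only [id_eq]; push_cast; ring)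
  exact h.deriv

lemma sum3_scaled (n1 n2 n3 : ℕ) (c : ℝ) (u v w : ℕ → ℝ) :
    ∑ i ∈ range n1, ∑ j ∈ range n2, ∑ k ∈ range n3, c * (u i * v j * w k)
      = c * ((∑ i ∈ range n1, u i) * (∑ j ∈ range n2, v j) * (∑ k ∈ range n3, w k)) := by
  rw [← sum3_split]
  simp_rw [← Finset.mul_sum]

lemma sum3_scaled' (n1 n2 n3 : ℕ) (c : ℝ) (g : ℕ → ℕ → ℕ → ℝ) :
    ∑ i ∈ range n1, ∑ j ∈ range n2, ∑ k ∈ range n3, c * g i j k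
      = c * ∑ i ∈ range n1, ∑ j ∈ range n2, ∑ k ∈ range n3, g i j k := by
  simp_rw [← Finset.mul_sum]

theorem stmt_1 (n1 n2 n3 : ℕ) (h1 : 2 ≤ n1) (h2 : 2 ≤ n2) (h3 : 2 ≤ n3)
    (f : ℕ → ℕ → ℕ → ℝ)
    (SE : ℝ → ℝ → ℝ → ℝ → ℝ)
    (hSE : ∀ b0 b1 b2 b3, SE b0 b1 b2 b3 =
      ∑ i ∈ Finset.range n1, ∑ j ∈ Finset.range n2, ∑ k ∈ Finset.range n3,
        (b0 + b1 * i + b2 * j + b3 * k - f i j k) ^ 2)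
    (V0 Vx Vy Vz : ℝ)
    (hV0 : V0 = ∑ i ∈ Finset.range n1, ∑ j ∈ Finset.range n2, ∑ k ∈ Finset.range n3, f i j k)
    (hVx : Vx = ∑ i ∈ Finset.range n1, ∑ j ∈ Finset.range n2, ∑ k ∈ Finset.range n3, (i : ℝ) * f i j k)
    (hVy : Vy = ∑ i ∈ Finset.range n1, ∑ j ∈ Finset.range n2, ∑ k ∈ Finset.range n3, (j : ℝ) * f i j k)
    (hVz : Vz = ∑ i ∈ Finset.range n1, ∑ j ∈ Finset.range n2, ∑ k ∈ Finset.range n3, (k : ℝ) * f i j k)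
    (b0 b1 b2 b3 : ℝ)
    (hb1 : b1 = 6 / (n1 * n2 * n3 * (n1 + 1)) * (2 * Vx / (n1 - 1) - V0))
    (hb2 : b2 = 6 / (n1 * n2 * n3 * (n2 + 1)) * (2 * Vy / (n2 - 1) - V0))
    (hb3 : b3 = 6 / (n1 * n2 * n3 * (n3 + 1)) * (2 * Vz / (n3 - 1) - V0))
    (hb0 : b0 = V0 / (n1 * n2 * n3) -
      ((n1 - 1) / 2 * b1 + (n2 - 1) / 2 * b2 + (n3 - 1) / 2 * b3)) :
    deriv (fun t => SE t b1 b2 b3) b0 = 0 ∧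
    deriv (fun t => SE b0 t b2 b3) b1 = 0 ∧
    deriv (fun t => SE b0 b1 t b3) b2 = 0 ∧
    deriv (fun t => SE b0 b1 b2 t) b3 = 0 := by
  have hn1 : (n1:ℝ) ≠ 0 := by positivity
  have hn2 : (n2:ℝ) ≠ 0 := by positivity
  have hn3 : (n3:ℝ) ≠ 0 := by positivity
  have hn1' : (n1:ℝ) - 1 ≠ 0 := by
    have : (2:ℝ) ≤ n1 := by exact_mod_cast h1
    nlinarith
  have hn2' : (n2:ℝ) - 1 ≠ 0 := by
    have : (2:ℝ) ≤ n2 := by exact_mod_cast h2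
    nlinarith
  have hn3' : (n3:ℝ) - 1 ≠ 0 := by
    have : (2:ℝ) ≤ n3 := by exact_mod_cast h3
    nlinarith
  have hn1'' : (n1:ℝ) + 1 ≠ 0 := by positivity
  have hn2'' : (n2:ℝ) + 1 ≠ 0 := by positivity
  have hn3'' : (n3:ℝ) + 1 ≠ 0 := by positivity
  refine ⟨?_, ?_, ?_, ?_⟩
  · -- derivative in b0
    have hfun : (fun t => SE t b1 b2 b3) = fun t =>
        ∑ i ∈ range n1, ∑ j ∈ range n2, ∑ k ∈ range n3,
          ((1:ℝ) * t + (b1 * i + b2 * j + b3 * k - f i j k))^2 := by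
      funext t; rw [hSE]
      refine Finset.sum_congr rfl fun i _ => Finset.sum_congr rfl fun j _ =>
        Finset.sum_congr rfl fun k _ => by ring
    rw [hfun, derivKey]
    have key : ∑ i ∈ range n1, ∑ j ∈ range n2, ∑ k ∈ range n3,
        (2:ℝ) * 1 * (1 * b0 + (b1 * i + b2 * j + b3 * k - f i j k))
      = ∑ i ∈ range n1, ∑ j ∈ range n2, ∑ k ∈ range n3,
        ((2*b0)*((1:ℝ)*1*1) + (2*b1)*((i:ℝ)*1*1) + (2*b2)*((1:ℝ)*(j:ℝ)*1)
          + (2*b3)*((1:ℝ)*1*(k:ℝ)) + (-2)*(f i j k)) := by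
      refine Finset.sum_congr rfl fun i _ => Finset.sum_congr rfl fun j _ =>
        Finset.sum_congr rfl fun k _ => by ring
    rw [key]
    simp only [Finset.sum_add_distrib]
    rw [sum3_scaled, sum3_scaled, sum3_scaled, sum3_scaled, sum3_scaled']
    simp only [mysum0, mysum1, mysum2]
    rw [← hV0, hb0, hb1, hb2, hb3]
    field_simp
    ring
  · -- derivative in b1
    have hfun : (fun t => SE b0 t b2 b3) = fun t =>
        ∑ i ∈ range n1, ∑ j ∈ range n2, ∑ k ∈ range n3,
          ((i:ℝ) * t + (b0 + b2 * j + b3 * k - f i j k))^2 := by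
      funext t; rw [hSE]
      refine Finset.sum_congr rfl fun i _ => Finset.sum_congr rfl fun j _ =>
        Finset.sum_congr rfl fun k _ => by ring
    rw [hfun, derivKey]
    have key : ∑ i ∈ range n1, ∑ j ∈ range n2, ∑ k ∈ range n3,
        (2:ℝ) * i * ((i:ℝ) * b1 + (b0 + b2 * j + b3 * k - f i j k))
      = ∑ i ∈ range n1, ∑ j ∈ range n2, ∑ k ∈ range n3,
        ((2*b1)*((i:ℝ)^2*1*1) + (2*b0)*((i:ℝ)*1*1) + (2*b2)*((i:ℝ)*(j:ℝ)*1)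
          + (2*b3)*((i:ℝ)*1*(k:ℝ)) + (-2)*((i:ℝ) * f i j k)) := by
      refine Finset.sum_congr rfl fun i _ => Finset.sum_congr rfl fun j _ =>
        Finset.sum_congr rfl fun k _ => by ring
    rw [key]
    simp only [Finset.sum_add_distrib]
    rw [sum3_scaled, sum3_scaled, sum3_scaled, sum3_scaled, sum3_scaled']
    simp only [mysum0, mysum1, mysum2]
    rw [← hVx, hb0, hb1, hb2, hb3]
    field_simp
    ring
  · -- derivative in b2
    have hfun : (fun t => SE b0 b1 t b3) = fun t =>
        ∑ i ∈ range n1, ∑ j ∈ range n2, ∑ k ∈ range n3,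
          ((j:ℝ) * t + (b0 + b1 * i + b3 * k - f i j k))^2 := by
      funext t; rw [hSE]
      refine Finset.sum_congr rfl fun i _ => Finset.sum_congr rfl fun j _ =>
        Finset.sum_congr rfl fun k _ => by ring
    rw [hfun, derivKey]
    have key : ∑ i ∈ range n1, ∑ j ∈ range n2, ∑ k ∈ range n3,
        (2:ℝ) * j * ((j:ℝ) * b2 + (b0 + b1 * i + b3 * k - f i j k))
      = ∑ i ∈ range n1, ∑ j ∈ range n2, ∑ k ∈ range n3,
        ((2*b2)*((1:ℝ)*(j:ℝ)^2*1) + (2*b0)*((1:ℝ)*(j:ℝ)*1) + (2*b1)*((i:ℝ)*(j:ℝ)*1)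
          + (2*b3)*((1:ℝ)*(j:ℝ)*(k:ℝ)) + (-2)*((j:ℝ) * f i j k)) := by
      refine Finset.sum_congr rfl fun i _ => Finset.sum_congr rfl fun j _ =>
        Finset.sum_congr rfl fun k _ => by ring
    rw [key]
    simp only [Finset.sum_add_distrib]
    rw [sum3_scaled, sum3_scaled, sum3_scaled, sum3_scaled, sum3_scaled']
    simp only [mysum0, mysum1, mysum2]
    rw [← hVy, hb0, hb1, hb2, hb3]
    field_simp
    ring
  · -- derivative in b3
    have hfun : (fun t => SE b0 b1 b2 t) = fun t =>
        ∑ i ∈ range n1, ∑ j ∈ range n2, ∑ k ∈ range n3,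
          ((k:ℝ) * t + (b0 + b1 * i + b2 * j - f i j k))^2 := by
      funext t; rw [hSE]
      refine Finset.sum_congr rfl fun i _ => Finset.sum_congr rfl fun j _ =>
        Finset.sum_congr rfl fun k _ => by ring
    rw [hfun, derivKey]
    have key : ∑ i ∈ range n1, ∑ j ∈ range n2, ∑ k ∈ range n3,
        (2:ℝ) * k * ((k:ℝ) * b3 + (b0 + b1 * i + b2 * j - f i j k))
      = ∑ i ∈ range n1, ∑ j ∈ range n2, ∑ k ∈ range n3,
        ((2*b3)*((1:ℝ)*1*(k:ℝ)^2) + (2*b0)*((1:ℝ)*1*(k:ℝ)) + (2*b1)*((i:ℝ)*1*(k:ℝ))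
          + (2*b2)*((1:ℝ)*(j:ℝ)*(k:ℝ)) + (-2)*((k:ℝ) * f i j k)) := by
      refine Finset.sum_congr rfl fun i _ => Finset.sum_congr rfl fun j _ =>
        Finset.sum_congr rfl fun k _ => by ring
    rw [key]
    simp only [Finset.sum_add_distrib]
    rw [sum3_scaled, sum3_scaled, sum3_scaled, sum3_scaled, sum3_scaled']
    simp only [mysum0, mysum1, mysum2]
    rw [← hVz, hb0, hb1, hb2, hb3]
    field_simp
    ring
end

section
/- The minimal squared error of the 1D fit satisfies min SE = Σ_i f_i² − V_0²/n − (12/(n(n²−1)))·(V_x − (n−1)V_0/2)² for n ≥ 2. -/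
lemma sum_id_real (n : ℕ) : ∑ i ∈ Finset.range n, (i : ℝ) = n * (n - 1) / 2 := by
  induction n with
  | zero => simp
  | succ m ih => rw [Finset.sum_range_succ, ih]; push_cast; ring

lemma sum_sq_real (n : ℕ) :
    ∑ i ∈ Finset.range n, (i : ℝ) ^ 2 = n * (n - 1) * (2 * n - 1) / 6 := by
  induction n with
  | zero => simp
  | succ m ih => rw [Finset.sum_range_succ, ih]; push_cast; ring

theorem stmt_19 (n : ℕ) (hn : 2 ≤ n) (f : ℕ → ℝ)
    (V0 Vx : ℝ) (hV0 : V0 = ∑ i ∈ Finset.range n, f i)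
    (hVx : Vx = ∑ i ∈ Finset.range n, (i : ℝ) * f i)
    (b0 b1 : ℝ)
    (hmin : ∀ c0 c1, (∑ i ∈ Finset.range n, (b0 + b1 * i - f i) ^ 2) ≤
      ∑ i ∈ Finset.range n, (c0 + c1 * i - f i) ^ 2) :
    (∑ i ∈ Finset.range n, (b0 + b1 * i - f i) ^ 2) =
      (∑ i ∈ Finset.range n, f i ^ 2) - V0 ^ 2 / n -
        12 / (n * ((n : ℝ) ^ 2 - 1)) * (Vx - ((n : ℝ) - 1) * V0 / 2) ^ 2 := by
  set N : ℝ := (n : ℝ) with hNdef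
  have hN2 : (2 : ℝ) ≤ N := by rw [hNdef]; exact_mod_cast hn
  have hN0 : N ≠ 0 := by linarith
  have hD : 0 < N * (N ^ 2 - 1) / 12 := by nlinarith
  set D : ℝ := N * (N ^ 2 - 1) / 12 with hDdef
  have hDne : D ≠ 0 := ne_of_gt hD
  set W : ℝ := Vx - (N - 1) * V0 / 2 with hWdef
  -- expansion of SE(c0, c1)
  have expand : ∀ c0 c1 : ℝ, (∑ i ∈ Finset.range n, (c0 + c1 * i - f i) ^ 2) =
      (∑ i ∈ Finset.range n, f i ^ 2) + c0 ^ 2 * N +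
        c1 ^ 2 * (N * (N - 1) * (2 * N - 1) / 6) + 2 * c0 * c1 * (N * (N - 1) / 2)
        - 2 * c0 * V0 - 2 * c1 * Vx := by
    intro c0 c1
    have h1 : (∑ i ∈ Finset.range n, (c0 + c1 * i - f i) ^ 2) =
        ∑ i ∈ Finset.range n, (f i ^ 2 + c0 ^ 2 + c1 ^ 2 * (i : ℝ) ^ 2
          + 2 * c0 * c1 * (i : ℝ) - 2 * c0 * f i - 2 * c1 * ((i : ℝ) * f i)) := by
      apply Finset.sum_congr rfl; intro i _; ring
    rw [h1]
    simp only [Finset.sum_add_distrib, Finset.sum_sub_distrib, ← Finset.mul_sum,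
      Finset.sum_const, Finset.card_range, nsmul_eq_mul, sum_id_real, sum_sq_real,
      ← hV0, ← hVx, ← hNdef]
    ring
  -- complete the square identity
  have ident : ∀ c0 c1 : ℝ, (∑ i ∈ Finset.range n, (c0 + c1 * i - f i) ^ 2) =
      ((∑ i ∈ Finset.range n, f i ^ 2) - V0 ^ 2 / N - W ^ 2 / D)
        + N * (c0 + c1 * (N - 1) / 2 - V0 / N) ^ 2 + D * (c1 - W / D) ^ 2 := by
    intro c0 c1
    have h1 : N ^ 2 - 1 ≠ 0 := by nlinarith
    rw [expand c0 c1, hWdef, hDdef]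
    field_simp
    ring
  have hle : (∑ i ∈ Finset.range n, (b0 + b1 * i - f i) ^ 2) ≤
      (∑ i ∈ Finset.range n, f i ^ 2) - V0 ^ 2 / N - W ^ 2 / D := by
    have := hmin (V0 / N - (W / D) * (N - 1) / 2) (W / D)
    rw [ident (V0 / N - (W / D) * (N - 1) / 2) (W / D)] at this
    have e1 : (V0 / N - (W / D) * (N - 1) / 2) + (W / D) * (N - 1) / 2 - V0 / N = 0 := by ring
    nlinarith [this]
  have hge : (∑ i ∈ Finset.range n, f i ^ 2) - V0 ^ 2 / N - W ^ 2 / D ≤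
      (∑ i ∈ Finset.range n, (b0 + b1 * i - f i) ^ 2) := by
    rw [ident b0 b1]
    nlinarith [sq_nonneg (b0 + b1 * (N - 1) / 2 - V0 / N), sq_nonneg (b1 - W / D),
      mul_nonneg (le_of_lt hD) (sq_nonneg (b1 - W / D)),
      mul_nonneg (by linarith : (0:ℝ) ≤ N) (sq_nonneg (b0 + b1 * (N - 1) / 2 - V0 / N))]
  have hfinal : 12 / (N * (N ^ 2 - 1)) * W ^ 2 = W ^ 2 / D := by
    rw [hDdef]; field_simp
  rw [hfinal]
  linarith
end
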